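/- Under the accelerated scheme with strong duality (constant D_y), the iterates satisfy Σ_{k−1}√(f(s^k) − f_*) ≤ (D_y + √(D_y² + λ D_x²))/√2 where D_x = ‖x^0 − x̄‖; consequently f(s^k) − f_* = O(1/k⁴) and ‖x^k − x̄‖² ≤ (D_x² + D_y²/λ)·9/(k+2)², i.e., ‖x^k − x̄‖ = O(1/k). -/

import Mathlib

/-!
The Lyapunov function
`E_k = (Σ_{k-1} + λ)/2 ‖x^k - x̄‖² + Σ_{k-1}² (f(s^k) - f_*) + Σ_{k-1} (g(s^k) - g_*)`
is nonincreasing along the scheme and `E_0 = λ D_x² / 2`. One step combines the three-point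
inequality of the `(1 + τ_k)`-strongly convex prox step, the descent lemma for `f` (this is where
`λ ‖A‖² ≤ 1` enters), convexity of `g` along the averaging that defines `s^{k+1}`, and the exact
quadratic structure `f - f_* = ½ ‖A (· - x̄)‖²`, which lets the extrapolated point `z^k` be
traded for `s^k` without loss. Strong duality gives `g(s^k) - g_* ≥ -D_y ‖A (s^k - x̄)‖`, so
`E_k ≤ λ D_x²/2` is a quadratic inequality in `t = Σ_{k-1} ‖A (s^k - x̄)‖`, whence
`t ≤ D_y + √(D_y² + λ D_x²)`. The rates follow from `Σ_{k-1} + λ = λ / τ_k²` and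
`1/τ_k ≥ (k + 3)/3`, since `1/τ_{k+1}² = 1/τ_k² + 1/τ_k`.
-/

open Set Filter Topology RealInnerProductSpace Finset
open ContinuousLinearMap (adjoint)

section Stepsize

variable {τ : ℕ → ℝ}

theorem stepsize_pos (hτ0 : τ 0 = 1) (hτrec : ∀ k, τ (k + 1) = τ k / √(1 + τ k)) (k : ℕ) :
    0 < τ k := by
  induction k with
  | zero => rw [hτ0]; exact one_pos
  | succ k ih => rw [hτrec]; exact div_pos ih (Real.sqrt_pos.2 (by linarith))

theorem inv_stepsize_succ_sq (hτ0 : τ 0 = 1) (hτrec : ∀ k, τ (k + 1) = τ k / √(1 + τ k))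
    (k : ℕ) : (τ (k + 1))⁻¹ ^ 2 = (τ k)⁻¹ ^ 2 + (τ k)⁻¹ := by
  have hτ := stepsize_pos hτ0 hτrec k
  rw [hτrec, inv_div, div_pow, Real.sq_sqrt (by linarith)]
  field_simp

theorem add_three_div_three_le_inv_stepsize (hτ0 : τ 0 = 1)
    (hτrec : ∀ k, τ (k + 1) = τ k / √(1 + τ k)) (k : ℕ) : ((k : ℝ) + 3) / 3 ≤ (τ k)⁻¹ := by
  induction k with
  | zero => simp [hτ0]
  | succ k ih =>
    have h0 : (0 : ℝ) ≤ (k + 3) / 3 := by positivity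
    refine le_of_pow_le_pow_left₀ two_ne_zero (inv_pos.2 (stepsize_pos hτ0 hτrec _)).le ?_
    rw [inv_stepsize_succ_sq hτ0 hτrec]
    push_cast
    nlinarith [pow_le_pow_left₀ h0 ih 2, (Nat.cast_nonneg k : (0 : ℝ) ≤ k)]

theorem sum_div_stepsize (hτ0 : τ 0 = 1) (hτrec : ∀ k, τ (k + 1) = τ k / √(1 + τ k))
    {lam : ℝ} {σ : ℕ → ℝ} (hσ : ∀ k, σ k = lam / τ k) (k : ℕ) :
    ∑ i ∈ range k, σ i = lam * ((τ k)⁻¹ ^ 2 - 1) := by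
  induction k with
  | zero => simp [hτ0]
  | succ k ih =>
    rw [sum_range_succ, ih, hσ, inv_stepsize_succ_sq hτ0 hτrec, div_eq_mul_inv]
    ring

theorem mul_sq_le_sum_div_stepsize_add (hτ0 : τ 0 = 1)
    (hτrec : ∀ k, τ (k + 1) = τ k / √(1 + τ k)) {lam : ℝ} (hlam : 0 ≤ lam) {σ : ℕ → ℝ}
    (hσ : ∀ k, σ k = lam / τ k) (k : ℕ) :
    lam * (((k : ℝ) + 3) / 3) ^ 2 ≤ ∑ i ∈ range k, σ i + lam := by
  rw [sum_div_stepsize hτ0 hτrec hσ]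
  have := pow_le_pow_left₀ (by positivity) (add_three_div_three_le_inv_stepsize hτ0 hτrec k) 2
  nlinarith

end Stepsize

section Convexity

variable {E : Type*} [NormedAddCommGroup E] [InnerProductSpace ℝ E]

theorem ConvexOn.mul_apply_inv_smul_add_le {g : E → ℝ} (hg : ConvexOn ℝ univ g) {a b : ℝ}
    (ha : 0 ≤ a) (hb : 0 ≤ b) (hab : 0 < a + b) (x y : E) :
    (a + b) * g ((a + b)⁻¹ • (a • x + b • y)) ≤ a * g x + b * g y := by
  have hweights : (a + b)⁻¹ * a + (a + b)⁻¹ * b = 1 := by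
    rw [← mul_add, inv_mul_cancel₀ hab.ne']
  have h := hg.2 (mem_univ x) (mem_univ y) (by positivity) (by positivity) hweights
  rw [← smul_smul, ← smul_smul, ← smul_add, smul_eq_mul, smul_eq_mul] at h
  calc (a + b) * g ((a + b)⁻¹ • (a • x + b • y))
      ≤ (a + b) * ((a + b)⁻¹ * a * g x + (a + b)⁻¹ * b * g y) :=
        mul_le_mul_of_nonneg_left h hab.le
    _ = a * g x + b * g y := by field_simp

theorem StrongConvexOn.add_mul_norm_sub_sq_le_of_isMinOn {s : Set E} {m : ℝ} {f : E → ℝ}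
    {x y : E} (hf : StrongConvexOn s m f) (hmin : IsMinOn f s x) (hx : x ∈ s) (hy : y ∈ s) :
    f x + m / 2 * ‖y - x‖ ^ 2 ≤ f y := by
  set K := m / 2 * ‖y - x‖ ^ 2
  have hnear : ∀ t ∈ Ioc (0 : ℝ) 1, f x + (1 - t) * K ≤ f y := by
    rintro t ⟨ht0, ht1⟩
    have hmem := hf.1 hy hx ht0.le (sub_nonneg.2 ht1) (add_sub_cancel t 1)
    have hconv := hf.2 hy hx ht0.le (sub_nonneg.2 ht1) (add_sub_cancel t 1)
    have hle := isMinOn_iff.1 hmin _ hmem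
    rw [smul_eq_mul, smul_eq_mul] at hconv
    refine le_of_mul_le_mul_left ?_ ht0
    linear_combination hle + hconv
  have hlim : Tendsto (fun t : ℝ => f x + (1 - t) * K) (𝓝[>] 0) (𝓝 (f x + K)) := by
    refine tendsto_nhdsWithin_of_tendsto_nhds ?_
    exact (by fun_prop : Continuous fun t : ℝ => f x + (1 - t) * K).tendsto' 0 _ (by simp)
  refine le_of_tendsto hlim ?_
  filter_upwards [Ioc_mem_nhdsGT zero_lt_one] with t ht using hnear t ht

theorem StrongConvexOn.prox_add_sq_le {g : E → ℝ} (hg : StrongConvexOn univ 1 g) {τ : ℝ}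
    (hτ : 0 ≤ τ) {c x : E}
    (hx : ∀ y, τ * g x + 1 / 2 * ‖x - c‖ ^ 2 ≤ τ * g y + 1 / 2 * ‖y - c‖ ^ 2) (y : E) :
    τ * g x + 1 / 2 * ‖x - c‖ ^ 2 + (τ + 1) / 2 * ‖y - x‖ ^ 2
      ≤ τ * g y + 1 / 2 * ‖y - c‖ ^ 2 := by
  have hstrong : StrongConvexOn univ (τ + 1) fun y => τ * g y + 1 / 2 * ‖y - c‖ ^ 2 := by
    rw [strongConvexOn_iff_convex] at hg ⊢
    have haff : ConvexOn ℝ univ fun y => -⟪c, y⟫ + 1 / 2 * ‖c‖ ^ 2 :=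
      ((-innerₛₗ ℝ c).convexOn convex_univ).add_const _
    refine ((hg.smul hτ).add haff).congr fun y _ => ?_
    simp only [Pi.add_apply, smul_eq_mul, norm_sub_sq_real, real_inner_comm c]
    ring
  exact hstrong.add_mul_norm_sub_sq_le_of_isMinOn (isMinOn_univ_iff.2 hx) (mem_univ _) (mem_univ _)

theorem StrongConvexOn.prox_sub_smul_add_sq_le {g : E → ℝ} (hg : StrongConvexOn univ 1 g)
    {τ η : ℝ} (hτ : 0 ≤ τ) {x v x' : E}
    (hx' : ∀ y, τ * g x' + 1 / 2 * ‖x' - (x - η • v)‖ ^ 2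
      ≤ τ * g y + 1 / 2 * ‖y - (x - η • v)‖ ^ 2) (y : E) :
    τ * g x' + 1 / 2 * ‖x' - x‖ ^ 2 + η * ⟪v, x' - x⟫ + (τ + 1) / 2 * ‖y - x'‖ ^ 2
      ≤ τ * g y + 1 / 2 * ‖y - x‖ ^ 2 + η * ⟪v, y - x⟫ := by
  have hexpand (u : E) : ‖u - (x - η • v)‖ ^ 2
      = ‖u - x‖ ^ 2 + 2 * η * ⟪v, u - x⟫ + η ^ 2 * ‖v‖ ^ 2 := by
    rw [show u - (x - η • v) = (u - x) + η • v by abel, norm_add_sq_real, real_inner_smul_right,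
      norm_smul, Real.norm_eq_abs, mul_pow, sq_abs, real_inner_comm]
    ring
  have h := hg.prox_add_sq_le hτ hx' y
  rw [hexpand, hexpand] at h
  linarith

end Convexity

section LeastSquares

variable {E F : Type*} [NormedAddCommGroup E] [InnerProductSpace ℝ E]
  [NormedAddCommGroup F] [InnerProductSpace ℝ F] (A : E →L[ℝ] F) (b : F)

noncomputable def leastSquares (x : E) : ℝ := 1 / 2 * ‖A x - b‖ ^ 2

variable {A b}

theorem leastSquares_eq_add_inner_add (u w : E) :
    leastSquares A b u
      = leastSquares A b w + ⟪A w - b, A (u - w)⟫ + 1 / 2 * ‖A (u - w)‖ ^ 2 := by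
  have h : A u - b = (A w - b) + A (u - w) := by rw [map_sub]; abel
  rw [leastSquares, leastSquares, h, norm_add_sq_real]
  ring

theorem inner_residual_eq_zero_of_isMin {xbar : E}
    (hmin : ∀ y, leastSquares A b xbar ≤ leastSquares A b y) (d : E) :
    ⟪A xbar - b, A d⟫ = 0 := by
  have hderiv : HasFDerivAt (leastSquares A b)
      ((1 / 2 : ℝ) • (2 • (innerSL ℝ (A xbar - b)).comp A)) xbar :=
    ((A.hasFDerivAt.sub_const b).norm_sq).const_mul (1 / 2 : ℝ)
  have hzero := IsLocalMin.hasFDerivAt_eq_zero (.of_forall hmin) hderiv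
  simpa [inner_sub_left] using congr($hzero d)

theorem leastSquares_sub_eq_of_isMin {xbar : E}
    (hmin : ∀ y, leastSquares A b xbar ≤ leastSquares A b y) (u : E) :
    leastSquares A b u - leastSquares A b xbar = 1 / 2 * ‖A (u - xbar)‖ ^ 2 := by
  rw [leastSquares_eq_add_inner_add u xbar, inner_residual_eq_zero_of_isMin hmin]
  ring

theorem sqrt_leastSquares_sub_eq_of_isMin {xbar : E}
    (hmin : ∀ y, leastSquares A b xbar ≤ leastSquares A b y) (u : E) :
    √(leastSquares A b u - leastSquares A b xbar) = ‖A (u - xbar)‖ / √2 := by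
  rw [leastSquares_sub_eq_of_isMin hmin,
    show 1 / 2 * ‖A (u - xbar)‖ ^ 2 = (‖A (u - xbar)‖ / √2) ^ 2 by
      rw [div_pow, Real.sq_sqrt zero_le_two]; ring,
    Real.sqrt_sq (by positivity)]

variable [CompleteSpace E] [CompleteSpace F]

theorem leastSquares_eq_add_inner_adjoint_add (u w : E) :
    leastSquares A b u
      = leastSquares A b w + ⟪adjoint A (A w - b), u - w⟫ + 1 / 2 * ‖A (u - w)‖ ^ 2 := by
  rw [ContinuousLinearMap.adjoint_inner_left, leastSquares_eq_add_inner_add]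

theorem leastSquares_add_inner_adjoint_le (u w : E) :
    leastSquares A b w + ⟪adjoint A (A w - b), u - w⟫ ≤ leastSquares A b u := by
  rw [leastSquares_eq_add_inner_adjoint_add u w]
  have := sq_nonneg ‖A (u - w)‖
  linarith

theorem leastSquares_le_add_inner_adjoint_add (u w : E) :
    leastSquares A b u
      ≤ leastSquares A b w + ⟪adjoint A (A w - b), u - w⟫ + ‖A‖ ^ 2 / 2 * ‖u - w‖ ^ 2 := by
  rw [leastSquares_eq_add_inner_adjoint_add u w]
  have := pow_le_pow_left₀ (norm_nonneg _) (A.le_opNorm (u - w)) 2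
  rw [mul_pow] at this
  linarith

theorem sq_mul_leastSquares_le_of_smul_sub_eq {T σ : ℝ} {u w d : E} (h : T • (u - w) = σ • d) :
    T ^ 2 * leastSquares A b u
      ≤ T ^ 2 * leastSquares A b w + σ * T * ⟪adjoint A (A w - b), d⟫
        + σ ^ 2 * ‖A‖ ^ 2 / 2 * ‖d‖ ^ 2 := by
  have hdesc := mul_le_mul_of_nonneg_left
    (leastSquares_le_add_inner_adjoint_add (A := A) (b := b) u w) (sq_nonneg T)
  have hinner : T ^ 2 * ⟪adjoint A (A w - b), u - w⟫ = σ * T * ⟪adjoint A (A w - b), d⟫ := by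
    rw [sq, mul_assoc, ← real_inner_smul_right, h, real_inner_smul_right]
    ring
  have hnorm : T ^ 2 * ‖u - w‖ ^ 2 = σ ^ 2 * ‖d‖ ^ 2 := by
    have := congr(‖$h‖ ^ 2)
    rwa [norm_smul, norm_smul, mul_pow, mul_pow, Real.norm_eq_abs, Real.norm_eq_abs, sq_abs,
      sq_abs] at this
  linear_combination hdesc + hinner + ‖A‖ ^ 2 / 2 * hnorm

theorem leastSquares_extrapolation_le {xbar : E}
    (hmin : ∀ y, leastSquares A b xbar ≤ leastSquares A b y) {σ S : ℝ} (hT : σ + S ≠ 0)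
    {x s z : E} (hz : (σ + S) • z = σ • x + S • s) :
    (σ + S) ^ 2 * (leastSquares A b z - leastSquares A b xbar)
        + σ * (σ + S) * ⟪adjoint A (A z - b), xbar - x⟫
      ≤ S ^ 2 * (leastSquares A b s - leastSquares A b xbar) := by
  -- With `w = (σ x̄ + S s)/(σ + S)` one has `σ (x̄ - x) = (σ + S)(w - z)`; as `f - f_*` is a
  -- quadratic form centred at `x̄`, `f w - f_* = (S/(σ + S))² (f s - f_*)`, whereas mere
  -- convexity would only give the factor `S/(σ + S)`.
  set T := σ + S
  set w := T⁻¹ • (σ • xbar + S • s)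
  have hTw : T • (w - z) = σ • (xbar - x) := by
    rw [smul_sub, hz, smul_inv_smul₀ hT]
    module
  have hwx : T • (w - xbar) = S • (s - xbar) := by
    rw [smul_sub, smul_inv_smul₀ hT]
    module
  have hw : T ^ 2 * (leastSquares A b w - leastSquares A b xbar)
      = S ^ 2 * (leastSquares A b s - leastSquares A b xbar) := by
    have := congr(1 / 2 * ‖A $hwx‖ ^ 2)
    simp only [map_smul, norm_smul, Real.norm_eq_abs, mul_pow, sq_abs] at this
    rw [leastSquares_sub_eq_of_isMin hmin, leastSquares_sub_eq_of_isMin hmin]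
    linear_combination this
  have hinner : σ * T * ⟪adjoint A (A z - b), xbar - x⟫
      = T ^ 2 * ⟪adjoint A (A z - b), w - z⟫ := by
    rw [mul_comm σ, mul_assoc, ← real_inner_smul_right, ← hTw, real_inner_smul_right]
    ring
  have hgrad := mul_le_mul_of_nonneg_left
    (leastSquares_add_inner_adjoint_le (A := A) (b := b) w z) (sq_nonneg T)
  rw [hinner, ← hw]
  linarith

noncomputable def lyapunov (f g : E → ℝ) (lam S : ℝ) (xbar x s : E) : ℝ :=
  (S + lam) / 2 * ‖x - xbar‖ ^ 2 + S ^ 2 * (f s - f xbar) + S * (g s - g xbar)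

theorem lyapunov_step_le {g : E → ℝ} (hg : StrongConvexOn univ 1 g) {lam τ σ S S' : ℝ}
    (hlam : 0 < lam) (hstep : lam * ‖A‖ ^ 2 ≤ 1) (hτ : 0 < τ) (hS : 0 ≤ S)
    (hτS : (S + lam) * τ ^ 2 = lam) (hσ : σ = (S + lam) * τ) (hS' : S' = S + σ)
    {xbar : E} (hmin : ∀ y, leastSquares A b xbar ≤ leastSquares A b y)
    {x s z x' s' : E} (hz : z = S'⁻¹ • (σ • x + S • s))
    (hprox : ∀ y,
      τ * g x' + 1 / 2 * ‖x' - (x - (τ * S') • adjoint A (A z - b))‖ ^ 2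
        ≤ τ * g y + 1 / 2 * ‖y - (x - (τ * S') • adjoint A (A z - b))‖ ^ 2)
    (hs' : s' = S'⁻¹ • (σ • x' + S • s)) :
    lyapunov (leastSquares A b) g lam S' xbar x' s'
      ≤ lyapunov (leastSquares A b) g lam S xbar x s := by
  set v := adjoint A (A z - b) with hv
  have hσ0 : 0 < σ := hσ ▸ mul_pos (by linarith) hτ
  have hS'0 : 0 < S' := by linarith
  have hx' : σ * g x' + (S + lam) / 2 * ‖x' - x‖ ^ 2 + σ * S' * ⟪v, x' - x⟫
        + (S' + lam) / 2 * ‖x' - xbar‖ ^ 2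
      ≤ σ * g xbar + (S + lam) / 2 * ‖x - xbar‖ ^ 2 + σ * S' * ⟪v, xbar - x⟫ := by
    have h := hg.prox_sub_smul_add_sq_le hτ.le hprox xbar
    rw [norm_sub_rev xbar x, norm_sub_rev xbar x'] at h
    -- `(S + lam) * τ = σ` and `(S + lam) * (τ + 1) = S' + lam`
    have := mul_le_mul_of_nonneg_left h (by linarith : 0 ≤ S + lam)
    subst hσ hS'
    linarith
  have hf : S' ^ 2 * leastSquares A b s'
      ≤ S' ^ 2 * leastSquares A b z + σ * S' * ⟪v, x' - x⟫ + (S + lam) / 2 * ‖x' - x‖ ^ 2 := by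
    have hs'z : S' • (s' - z) = σ • (x' - x) := by
      rw [hs', hz, ← smul_sub, smul_inv_smul₀ hS'0.ne']
      module
    have hσA : σ ^ 2 * ‖A‖ ^ 2 ≤ S + lam := by
      have hσsq : σ ^ 2 = (S + lam) * lam := by rw [hσ]; linear_combination (S + lam) * hτS
      rw [hσsq, mul_assoc]
      exact mul_le_of_le_one_right (by linarith) hstep
    have := mul_le_mul_of_nonneg_right hσA (sq_nonneg ‖x' - x‖)
    linarith [sq_mul_leastSquares_le_of_smul_sub_eq (A := A) (b := b) hs'z]
  have hext := leastSquares_extrapolation_le hmin (σ := σ) (S := S) (x := x) (s := s) (z := z)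
    (by linarith) (by rw [hz, ← add_comm S σ, ← hS', smul_inv_smul₀ hS'0.ne'])
  have hgs : S' * g s' ≤ σ * g x' + S * g s := by
    have hconv : ConvexOn ℝ univ g := UniformConvexOn.convexOn hg fun r => by positivity
    rw [hs', hS', add_comm]
    exact hconv.mul_apply_inv_smul_add_le hσ0.le hS (by linarith) x' s
  unfold lyapunov
  rw [← hv, add_comm σ S] at hext
  rw [hS'] at hx' hf hgs ⊢
  linarith

theorem add_sq_le_of_lyapunov_le {g : E → ℝ} {lam S R : ℝ} (hS : 0 ≤ S) {xbar u x s : E}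
    (hmin : ∀ y, leastSquares A b xbar ≤ leastSquares A b y)
    (hsub : ∀ y, g y ≥ g xbar + ⟪-adjoint A (A u), y - xbar⟫)
    (h : lyapunov (leastSquares A b) g lam S xbar x s ≤ R / 2) :
    (S + lam) * ‖x - xbar‖ ^ 2 + (S * ‖A (s - xbar)‖) ^ 2
      ≤ 2 * ‖A u‖ * (S * ‖A (s - xbar)‖) + R := by
  have hg : -(‖A u‖ * ‖A (s - xbar)‖) ≤ g s - g xbar := by
    have := hsub s
    rw [inner_neg_left, ContinuousLinearMap.adjoint_inner_left] at this
    linarith [real_inner_le_norm (A u) (A (s - xbar))]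
  have := mul_le_mul_of_nonneg_left hg hS
  rw [lyapunov, leastSquares_sub_eq_of_isMin hmin] at h
  linarith

theorem lyapunov_le_of_scheme {g : E → ℝ} (hg : StrongConvexOn univ 1 g) {lam : ℝ}
    (hlam : 0 < lam) (hstep : lam * ‖A‖ ^ 2 ≤ 1) {τ σ Sig : ℕ → ℝ} (hτ0 : τ 0 = 1)
    (hτrec : ∀ k, τ (k + 1) = τ k / √(1 + τ k)) (hσ : ∀ k, σ k = lam / τ k)
    (hSig : ∀ k, Sig k = ∑ i ∈ range k, σ i) {x s z : ℕ → E}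
    (hz : ∀ k, z k = (Sig (k + 1))⁻¹ • (σ k • x k + Sig k • s k))
    (hprox : ∀ k y,
      τ k * g (x (k + 1)) + 1 / 2 * ‖x (k + 1) -
        (x k - (τ k * Sig (k + 1)) • adjoint A (A (z k) - b))‖ ^ 2
      ≤ τ k * g y + 1 / 2 * ‖y - (x k - (τ k * Sig (k + 1)) • adjoint A (A (z k) - b))‖ ^ 2)
    (hsrec : ∀ k, s (k + 1) = (Sig (k + 1))⁻¹ • (σ k • x (k + 1) + Sig k • s k))
    {xbar : E} (hmin : ∀ y, leastSquares A b xbar ≤ leastSquares A b y) (k : ℕ) :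
    lyapunov (leastSquares A b) g lam (Sig k) xbar (x k) (s k)
      ≤ lam * ‖x 0 - xbar‖ ^ 2 / 2 := by
  have hτ := stepsize_pos hτ0 hτrec
  have hSig_eq (k : ℕ) := (hSig k).trans (sum_div_stepsize hτ0 hτrec hσ k)
  induction k with
  | zero => exact le_of_eq (by simp [lyapunov, hSig]; ring)
  | succ k ih =>
    refine le_trans (lyapunov_step_le hg hlam hstep (hτ k) ?_ ?_ ?_ ?_ hmin (hz k) (hprox k)
      (hsrec k)) ih
    · rw [hSig]
      exact sum_nonneg fun i _ => (hσ i).symm ▸ (div_pos hlam (hτ i)).le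
    · rw [hSig_eq]
      field_simp [(hτ k).ne']
      ring
    · rw [hσ, hSig_eq]
      field_simp [(hτ k).ne']
      ring
    · rw [hSig, hSig, sum_range_succ]

end LeastSquares

theorem le_add_sqrt_of_sq_le_two_mul_add {t p c : ℝ} (h : t ^ 2 ≤ 2 * p * t + c) :
    t ≤ p + √(p ^ 2 + c) := by
  have := Real.abs_le_sqrt (show (t - p) ^ 2 ≤ p ^ 2 + c by linarith)
  linarith [le_abs_self (t - p)]

theorem stmt17_general (n m : ℕ)
    (A : EuclideanSpace ℝ (Fin n) →L[ℝ] EuclideanSpace ℝ (Fin m))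
    (b : EuclideanSpace ℝ (Fin m))
    (g : EuclideanSpace ℝ (Fin n) → ℝ)
    (hgstrong : ConvexOn ℝ Set.univ (fun x => g x - (1/2) * ‖x‖ ^ 2))
    (f : EuclideanSpace ℝ (Fin n) → ℝ)
    (hf : ∀ x, f x = (1/2) * ‖A x - b‖ ^ 2)
    (lam : ℝ) (hlam : 0 < lam) (hstep : lam * ‖A‖ ^ 2 ≤ 1)
    (τ σ Sig : ℕ → ℝ) (hτ0 : τ 0 = 1)
    (hτrec : ∀ k : ℕ, τ (k+1) = τ k / Real.sqrt (1 + τ k))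
    (hσ : ∀ k : ℕ, σ k = lam / τ k)
    (hSig : ∀ k : ℕ, Sig k = ∑ i ∈ Finset.range k, σ i)
    (x s z : ℕ → EuclideanSpace ℝ (Fin n))
    (hz : ∀ k : ℕ, z k = (Sig (k+1))⁻¹ • (σ k • x k + Sig k • s k))
    (hprox : ∀ k : ℕ, ∀ y,
      τ k * g (x (k+1)) + (1/2) * ‖x (k+1) -
        (x k - (τ k * Sig (k+1)) • (ContinuousLinearMap.adjoint A (A (z k) - b)))‖ ^ 2
      ≤ τ k * g y + (1/2) * ‖y -
        (x k - (τ k * Sig (k+1)) • (ContinuousLinearMap.adjoint A (A (z k) - b)))‖ ^ 2)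
    (hsrec : ∀ k : ℕ, s (k+1) = (Sig (k+1))⁻¹ • (σ k • x (k+1) + Sig k • s k))
    (xbar : EuclideanSpace ℝ (Fin n))
    (hxbar_f : ∀ y, f xbar ≤ f y)
    (ustar : EuclideanSpace ℝ (Fin n))
    (hsubgrad : ∀ y, g y ≥ g xbar +
      (inner ℝ (-(ContinuousLinearMap.adjoint A (A ustar))) (y - xbar) : ℝ)) :
    (∀ k : ℕ, 1 ≤ k →
      Sig k * Real.sqrt (f (s k) - f xbar)
        ≤ (‖A ustar‖ + Real.sqrt (‖A ustar‖ ^ 2 + lam * ‖x 0 - xbar‖ ^ 2))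
            / Real.sqrt 2)
    ∧ (∀ k : ℕ, 1 ≤ k →
      ‖x k - xbar‖ ^ 2
        ≤ (‖x 0 - xbar‖ ^ 2 + ‖A ustar‖ ^ 2 / lam) * (9 / ((k : ℝ) + 2) ^ 2))
    ∧ (∃ C : ℝ, ∀ k : ℕ, 1 ≤ k → f (s k) - f xbar ≤ C / (k : ℝ) ^ 4) := by
  obtain rfl : f = leastSquares A b := funext hf
  set D := ‖A ustar‖
  set R := lam * ‖x 0 - xbar‖ ^ 2
  have hweight (k : ℕ) : lam * (((k : ℝ) + 3) / 3) ^ 2 ≤ Sig k + lam :=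
    hSig k ▸ mul_sq_le_sum_div_stepsize_add hτ0 hτrec hlam.le hσ k
  have hSig_ge (k : ℕ) : lam * (k : ℝ) ^ 2 / 9 ≤ Sig k := by
    nlinarith [hweight k, (Nat.cast_nonneg k : (0 : ℝ) ≤ k)]
  have hSig0 (k : ℕ) : 0 ≤ Sig k := le_trans (by positivity) (hSig_ge k)
  have hkey (k : ℕ) := add_sq_le_of_lyapunov_le (hSig0 k) hxbar_f hsubgrad
    (lyapunov_le_of_scheme (strongConvexOn_iff_convex.2 hgstrong) hlam hstep hτ0 hτrec hσ hSig
      hz hprox hsrec hxbar_f k)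
  have hbound (k : ℕ) : Sig k * ‖A (s k - xbar)‖ ≤ D + √(D ^ 2 + R) := by
    have hnonneg := mul_nonneg (by linarith [hSig0 k] : 0 ≤ Sig k + lam) (sq_nonneg ‖x k - xbar‖)
    exact le_add_sqrt_of_sq_le_two_mul_add (by linarith [hkey k])
  refine ⟨fun k _ => ?_, fun k _ => ?_,
    ⟨81 * (D + √(D ^ 2 + R)) ^ 2 / (2 * lam ^ 2), fun k hk => ?_⟩⟩
  · rw [sqrt_leastSquares_sub_eq_of_isMin hxbar_f, mul_div_assoc']
    exact div_le_div_of_nonneg_right (hbound k) (Real.sqrt_nonneg 2)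
  · have hx : (Sig k + lam) * ‖x k - xbar‖ ^ 2 ≤ D ^ 2 + R := by
      linarith [hkey k, sq_nonneg (Sig k * ‖A (s k - xbar)‖ - D)]
    have hweight' : lam * (((k : ℝ) + 2) / 3) ^ 2 ≤ Sig k + lam :=
      le_trans (by gcongr; linarith) (hweight k)
    rw [show (‖x 0 - xbar‖ ^ 2 + D ^ 2 / lam) * (9 / ((k : ℝ) + 2) ^ 2)
        = (D ^ 2 + R) / (lam * (((k : ℝ) + 2) / 3) ^ 2) by field_simp; ring,
      le_div_iff₀ (by positivity)]
    linarith [mul_le_mul_of_nonneg_right hweight' (sq_nonneg ‖x k - xbar‖)]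
  · have hk' : (0 : ℝ) < k := by exact_mod_cast hk
    have hsq := pow_le_pow_left₀ (by positivity)
      ((mul_le_mul_of_nonneg_right (hSig_ge k) (norm_nonneg _)).trans (hbound k)) 2
    rw [leastSquares_sub_eq_of_isMin hxbar_f, le_div_iff₀ (by positivity),
      le_div_iff₀ (by positivity)]
    linarith

/-- Theorem 2 (ii): under the accelerated primal scheme with strong duality
(`u*` with `−AᵀAu*` a subgradient of `g` at `x̄`, `D_y = ‖Au*‖`,
`D_x = ‖x⁰ − x̄‖`), one has
`Σ_{k−1}√(f(s^k) − f_*) ≤ (D_y + √(D_y² + λD_x²))/√2`; consequently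
`f(s^k) − f_* = O(1/k⁴)` and `‖x^k − x̄‖² ≤ (D_x² + D_y²/λ)·9/(k+2)²`. -/
theorem stmt17 (n m : ℕ)
    (A : EuclideanSpace ℝ (Fin n) →L[ℝ] EuclideanSpace ℝ (Fin m))
    (b : EuclideanSpace ℝ (Fin m))
    (g : EuclideanSpace ℝ (Fin n) → ℝ)
    (hglsc : LowerSemicontinuous g)
    (hgstrong : ConvexOn ℝ Set.univ (fun x => g x - (1/2) * ‖x‖ ^ 2))
    (f : EuclideanSpace ℝ (Fin n) → ℝ)
    (hf : ∀ x, f x = (1/2) * ‖A x - b‖ ^ 2)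
    (lam : ℝ) (hlam : 0 < lam) (hstep : lam * ‖A‖ ^ 2 ≤ 1)
    (τ σ Sig : ℕ → ℝ) (hτ0 : τ 0 = 1)
    (hτrec : ∀ k : ℕ, τ (k+1) = τ k / Real.sqrt (1 + τ k))
    (hσ : ∀ k : ℕ, σ k = lam / τ k)
    (hSig : ∀ k : ℕ, Sig k = ∑ i ∈ Finset.range k, σ i)
    (x s z : ℕ → EuclideanSpace ℝ (Fin n))
    (hs0 : s 0 = x 0)
    (hz : ∀ k : ℕ, z k = (Sig (k+1))⁻¹ • (σ k • x k + Sig k • s k))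
    (hprox : ∀ k : ℕ, ∀ y,
      τ k * g (x (k+1)) + (1/2) * ‖x (k+1) -
        (x k - (τ k * Sig (k+1)) • (ContinuousLinearMap.adjoint A (A (z k) - b)))‖ ^ 2
      ≤ τ k * g y + (1/2) * ‖y -
        (x k - (τ k * Sig (k+1)) • (ContinuousLinearMap.adjoint A (A (z k) - b)))‖ ^ 2)
    (hsrec : ∀ k : ℕ, s (k+1) = (Sig (k+1))⁻¹ • (σ k • x (k+1) + Sig k • s k))
    (xbar : EuclideanSpace ℝ (Fin n))
    (hxbar_f : ∀ y, f xbar ≤ f y)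
    (hxbar_g : ∀ y, (∀ w, f y ≤ f w) → g xbar ≤ g y)
    (ustar : EuclideanSpace ℝ (Fin n))
    (hsubgrad : ∀ y, g y ≥ g xbar +
      (inner ℝ (-(ContinuousLinearMap.adjoint A (A ustar))) (y - xbar) : ℝ)) :
    (∀ k : ℕ, 1 ≤ k →
      Sig k * Real.sqrt (f (s k) - f xbar)
        ≤ (‖A ustar‖ + Real.sqrt (‖A ustar‖ ^ 2 + lam * ‖x 0 - xbar‖ ^ 2))
            / Real.sqrt 2)
    ∧ (∀ k : ℕ, 1 ≤ k →
      ‖x k - xbar‖ ^ 2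
        ≤ (‖x 0 - xbar‖ ^ 2 + ‖A ustar‖ ^ 2 / lam) * (9 / ((k : ℝ) + 2) ^ 2))
    ∧ (∃ C : ℝ, ∀ k : ℕ, 1 ≤ k → f (s k) - f xbar ≤ C / (k : ℝ) ^ 4) :=
  stmt17_general n m A b g hgstrong f hf lam hlam hstep τ σ Sig hτ0 hτrec hσ hSig x s z hz hprox
    hsrec xbar hxbar_f ustar hsubgrad
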